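/- Let α_0 ⊆ α_1 ⊆ … ⊆ α_{k−2} be nested subspaces of ℂⁿ with orthogonal projections π_{α_j}. Then the product of unitary loops ∏_{j=0}^{k−2} (π_{α_j} + λ π_{α_j}^⊥) applied to the Hardy space ℋ₊ equals α_0 + λα_1 + ⋯ + λ^{k−2} α_{k−2} + λ^{k−1} ℋ₊, i.e., the set of f ∈ ℋ₊ whose m-th Fourier coefficient lies in α_m for 0 ≤ m ≤ k−2. -/

import Mathlib

open MeasureTheory Complex
open scoped Matrix

noncomputable section

local instance : Fact (0 < 2 * Real.pi) := ⟨by positivity⟩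

/-- The circle `S¹` parametrized as `ℝ/2πℤ`; the point `θ` corresponds to `λ = e^{iθ} ∈ S¹`. -/
abbrev Tc : Type := AddCircle (2 * Real.pi)

/-- `ℂⁿ` as a Hilbert space. -/
abbrev Ecn (n : ℕ) : Type := EuclideanSpace ℂ (Fin n)

/-- The Hilbert space `L²(S¹, ℂⁿ)`. -/
abbrev H2 (n : ℕ) : Type := Lp (Ecn n) 2 (volume : Measure Tc)

/-- The Hardy space `ℋ₊ ⊂ L²(S¹,ℂⁿ)`: elements whose negative Fourier coefficients vanish. -/
def Hardy (n : ℕ) : Set (H2 n) :=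
  {f | ∀ m : ℤ, m < 0 → fourierCoeff (f : Tc → Ecn n) m = 0}

/-- The subset `Φℋ₊` of `L²(S¹,ℂⁿ)`: the image of the Hardy space under pointwise
multiplication by the matrix-valued function `Φ`. -/
def mulHardy {n : ℕ} (Φ : Tc → Matrix (Fin n) (Fin n) ℂ) : Set (H2 n) :=
  {g | ∃ f ∈ Hardy n, (g : Tc → Ecn n) =ᵐ[volume] fun θ =>
    (WithLp.equiv 2 (∀ _ : Fin n, ℂ)).symm
      ((Φ θ).mulVec (WithLp.equiv 2 (∀ _ : Fin n, ℂ) ((f : Tc → Ecn n) θ)))}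

/-- The orthogonal projection onto `β`, as an endomorphism of `ℂⁿ`. -/
def projL {n : ℕ} (β : Submodule ℂ (Ecn n)) : Ecn n →L[ℂ] Ecn n :=
  β.subtypeL.comp β.orthogonalProjectionOnto

/-
Multiplication by the loop `π_β + λ π_β^⊥` acts on Fourier coefficients by
`f̂ q ↦ π_β f̂ q + π_β^⊥ f̂ (q - 1)`, and multiplication by its inverse `π_β + λ⁻¹ π_β^⊥` by
`f̂ q ↦ π_β f̂ q + π_β^⊥ f̂ (q + 1)`. Hence, when `β` lies in every `α_m`, the loop maps
`{f ∈ ℋ₊ | f̂ m ∈ α_m}` into `{g ∈ ℋ₊ | ĝ 0 ∈ β, ĝ (m + 1) ∈ α_m}` and its inverse maps back.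
The theorem follows by induction on the number of factors, splitting off the smallest subspace
on the left.
-/

open AddCircle

section FourierCoeff

variable {T : ℝ} [Fact (0 < T)] {E : Type*} [NormedAddCommGroup E]

theorem haarAddCircle_absolutelyContinuous_volume :
    (haarAddCircle : Measure (AddCircle T)) ≪ volume := by
  rw [volume_eq_smul_haarAddCircle]
  exact Measure.absolutelyContinuous_smul (ENNReal.ofReal_pos.mpr Fact.out).ne'

theorem MeasureTheory.Lp.integrable_haarAddCircle {p : ENNReal} [Fact (1 ≤ p)]
    (f : Lp E p (volume : Measure (AddCircle T))) :
    Integrable (f : AddCircle T → E) haarAddCircle := by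
  have hf : Integrable (f : AddCircle T → E) (ENNReal.ofReal T • haarAddCircle) :=
    (Lp.memLp f).integrable Fact.out
  rwa [integrable_smul_measure (ENNReal.ofReal_pos.mpr Fact.out).ne' ENNReal.ofReal_ne_top] at hf

variable [NormedSpace ℂ E]

theorem fourierCoeff_congr_ae_volume {f g : AddCircle T → E} (h : f =ᵐ[volume] g) :
    fourierCoeff f = fourierCoeff g :=
  fourierCoeff_congr_ae (haarAddCircle_absolutelyContinuous_volume.ae_le h)

theorem fourierCoeff_fourier_smul (p : ℤ) (f : AddCircle T → E) (q : ℤ) :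
    fourierCoeff (fun t => fourier p t • f t) q = fourierCoeff f (q - p) := by
  simp_rw [fourierCoeff, smul_smul, ← fourier_add, show -q + p = -(q - p) by ring]

variable [CompleteSpace E] {F : Type*} [NormedAddCommGroup F] [NormedSpace ℂ F] [CompleteSpace F]

theorem fourierCoeff_comp_continuousLinearMap (c : E →L[ℂ] F) {f : AddCircle T → E}
    (hf : Integrable f haarAddCircle) (q : ℤ) :
    fourierCoeff (fun t => c (f t)) q = c (fourierCoeff f q) := by
  simp_rw [fourierCoeff, ← c.map_smul]
  exact c.integral_comp_comm (hf.fourier_smul _)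

theorem fourierCoeff_add_fourier_smul (c d : E →L[ℂ] F) (p : ℤ) {f : AddCircle T → E}
    (hf : Integrable f haarAddCircle) (q : ℤ) :
    fourierCoeff (fun t => c (f t) + fourier p t • d (f t)) q
      = c (fourierCoeff f q) + d (fourierCoeff f (q - p)) := by
  rw [show (fun t => c (f t) + fourier p t • d (f t))
      = (fun t => c (f t)) + fun t => fourier p t • d (f t) from rfl,
    fourierCoeff.add (c.integrable_comp hf) ((d.integrable_comp hf).fourier_smul p),
    Pi.add_apply, fourierCoeff_comp_continuousLinearMap c hf, fourierCoeff_fourier_smul,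
    fourierCoeff_comp_continuousLinearMap d hf]

end FourierCoeff

section MultiplierImage

variable {X E : Type*} [MeasurableSpace X] [NormedAddCommGroup E] [NormedSpace ℂ E]
  {p : ENNReal} {μ : Measure X}

def multiplierImage (A : X → E →L[ℂ] E) (S : Set (Lp E p μ)) : Set (Lp E p μ) :=
  {g | ∃ f ∈ S, (g : X → E) =ᵐ[μ] fun x => A x (f x)}

theorem multiplierImage_one (S : Set (Lp E p μ)) : multiplierImage (fun _ => 1) S = S := by
  ext g
  constructor
  · rintro ⟨f, hf, hgf⟩
    rwa [Lp.ext hgf]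
  · exact fun hg => ⟨g, hg, .of_forall fun _ => rfl⟩

theorem multiplierImage_mono (A : X → E →L[ℂ] E) {S S' : Set (Lp E p μ)} (h : S ⊆ S') :
    multiplierImage A S ⊆ multiplierImage A S' :=
  fun _ ⟨f, hf, hgf⟩ => ⟨f, h hf, hgf⟩

variable [TopologicalSpace X] [OpensMeasurableSpace X] [SecondCountableTopology X] [CompactSpace X]

theorem memLp_continuous_apply {A : X → E →L[ℂ] E} (hA : Continuous A)
    (f : Lp E p μ) : MemLp (fun x => A x (f x)) p μ := by
  obtain ⟨C, hC⟩ := (isCompact_range hA.norm).bddAbove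
  have hmeas : AEStronglyMeasurable (fun x => A x (f x)) μ :=
    isBoundedBilinearMap_apply.continuous.comp_aestronglyMeasurable
      (hA.aestronglyMeasurable.prodMk (Lp.aestronglyMeasurable f))
  refine (Lp.memLp f).of_le_mul (c := C) hmeas (.of_forall fun x => ?_)
  calc ‖A x (f x)‖ ≤ ‖A x‖ * ‖f x‖ := (A x).le_opNorm _
    _ ≤ C * ‖f x‖ := by gcongr; exact hC ⟨x, rfl⟩

theorem multiplierImage_mul (A : X → E →L[ℂ] E) {B : X → E →L[ℂ] E} (hB : Continuous B)
    (S : Set (Lp E p μ)) :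
    multiplierImage (fun x => A x * B x) S = multiplierImage A (multiplierImage B S) := by
  ext g
  constructor
  · rintro ⟨f, hf, hg⟩
    have hBf := memLp_continuous_apply hB f
    refine ⟨hBf.toLp _, ⟨f, hf, hBf.coeFn_toLp⟩, ?_⟩
    filter_upwards [hg, hBf.coeFn_toLp] with x hgx hBfx
    rw [hgx, hBfx, mul_apply_eq_comp]
  · rintro ⟨h, ⟨f, hf, hh⟩, hg⟩
    refine ⟨f, hf, ?_⟩
    filter_upwards [hg, hh] with x hgx hhx
    rw [hgx, hhx, mul_apply_eq_comp]

end MultiplierImage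

section ScaleOrthogonal

variable {𝕜 E : Type*} [RCLike 𝕜] [NormedAddCommGroup E] [InnerProductSpace 𝕜 E]
  (K : Submodule 𝕜 E) [K.HasOrthogonalProjection]

def scaleOrthogonal (z : 𝕜) : E →L[𝕜] E :=
  K.starProjection + z • (1 - K.starProjection)

theorem scaleOrthogonal_apply (z : 𝕜) (x : E) :
    scaleOrthogonal K z x = K.starProjection x + z • (x - K.starProjection x) :=
  rfl

theorem scaleOrthogonal_mul (a b : 𝕜) :
    scaleOrthogonal K a * scaleOrthogonal K b = scaleOrthogonal K (a * b) := by
  ext x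
  have hP : K.starProjection (K.starProjection x) = K.starProjection x :=
    K.starProjection_eq_self_iff.mpr (K.starProjection_apply_mem x)
  simp only [mul_apply_eq_comp, scaleOrthogonal_apply, map_add, map_smul, map_sub, hP, sub_self,
    smul_zero, add_zero]
  rw [add_sub_cancel_left, smul_smul, mul_comm]

theorem scaleOrthogonal_one : scaleOrthogonal K 1 = 1 := by
  simp [scaleOrthogonal]

theorem Continuous.scaleOrthogonal {X : Type*} [TopologicalSpace X] {f : X → 𝕜}
    (hf : Continuous f) :
    Continuous fun x => scaleOrthogonal K (f x) :=
  continuous_const.add (hf.smul continuous_const)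

theorem starProjection_add_sub_starProjection_mem {V : Submodule 𝕜 E} (hKV : K ≤ V) (x : E)
    {y : E} (hy : y ∈ V) : K.starProjection x + (y - K.starProjection y) ∈ V :=
  V.add_mem (hKV (K.starProjection_apply_mem x))
    (V.sub_mem hy (hKV (K.starProjection_apply_mem y)))

theorem sub_starProjection_eq_zero {y : E} (hy : y ∈ K) : y - K.starProjection y = 0 := by
  rw [K.starProjection_eq_self_iff.mpr hy, sub_self]

end ScaleOrthogonal

theorem List.le_getD_top_of_forall_le {α : Type*} [Preorder α] [OrderTop α] {a : α}
    {L : List α} (h : ∀ b ∈ L, a ≤ b) (m : ℕ) : a ≤ L.getD m ⊤ := by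
  rcases lt_or_ge m L.length with hm | hm
  · rw [L.getD_eq_getElem _ hm]
    exact h _ (L.getElem_mem hm)
  · rw [L.getD_eq_default _ hm]
    exact le_top

section HardyFlag

variable {n : ℕ}

def hardyFlag (L : List (Submodule ℂ (Ecn n))) : Set (H2 n) :=
  {f | f ∈ Hardy n ∧ ∀ m : ℕ, fourierCoeff (f : Tc → Ecn n) m ∈ L.getD m ⊤}

theorem hardyFlag_nil : hardyFlag ([] : List (Submodule ℂ (Ecn n))) = Hardy n := by
  simp [hardyFlag]

theorem hardyFlag_map_finRange {N : ℕ} (α : Fin N → Submodule ℂ (Ecn n)) :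
    hardyFlag ((List.finRange N).map α)
      = {f | f ∈ Hardy n ∧ ∀ m : Fin N, fourierCoeff (f : Tc → Ecn n) (m : ℕ) ∈ α m} := by
  ext f
  refine and_congr_right fun _ => ⟨fun h m => by simpa using h m, fun h m => ?_⟩
  by_cases hm : m < N
  · simpa [hm] using h ⟨m, hm⟩
  · simp [hm]

theorem fourierCoeff_eq_of_ae_eq_scaleOrthogonal {β : Submodule ℂ (Ecn n)} {p : ℤ}
    {g h : H2 n}
    (hgh : (g : Tc → Ecn n) =ᵐ[volume] fun θ => scaleOrthogonal β (fourier p θ) (h θ)) (q : ℤ) :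
    fourierCoeff (g : Tc → Ecn n) q = β.starProjection (fourierCoeff (h : Tc → Ecn n) q)
      + (fourierCoeff (h : Tc → Ecn n) (q - p)
        - β.starProjection (fourierCoeff (h : Tc → Ecn n) (q - p))) := by
  rw [fourierCoeff_congr_ae_volume hgh]
  exact fourierCoeff_add_fourier_smul β.starProjection (1 - β.starProjection) p
    (Lp.integrable_haarAddCircle h) q

variable {β : Submodule ℂ (Ecn n)} {L : List (Submodule ℂ (Ecn n))}

theorem multiplierImage_scaleOrthogonal_toCircle_subset (hβ : ∀ γ ∈ L, β ≤ γ) :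
    multiplierImage (fun θ => scaleOrthogonal β (toCircle θ : ℂ)) (hardyFlag L)
      ⊆ hardyFlag (β :: L) := by
  rintro g ⟨h, ⟨hH, hL⟩, hgh⟩
  have hcoeff :=
    fourierCoeff_eq_of_ae_eq_scaleOrthogonal (p := 1) (by simpa only [fourier_one] using hgh)
  refine ⟨fun m hm => ?_, fun m => ?_⟩
  · rw [hcoeff, hH m hm, hH (m - 1) (by omega)]
    simp
  cases m with
  | zero =>
    rw [hcoeff, Nat.cast_zero, zero_sub, hH (-1) (by norm_num)]
    simp
  | succ m =>
    rw [hcoeff, List.getD_cons_succ, Nat.cast_succ, add_sub_cancel_right]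
    exact starProjection_add_sub_starProjection_mem β (L.le_getD_top_of_forall_le hβ m) _ (hL m)

theorem multiplierImage_scaleOrthogonal_fourier_neg_one_subset (hβ : ∀ γ ∈ L, β ≤ γ) :
    multiplierImage (fun θ => scaleOrthogonal β (fourier (-1) θ)) (hardyFlag (β :: L))
      ⊆ hardyFlag L := by
  rintro h ⟨g, ⟨hH, hL⟩, hhg⟩
  have hcoeff := fourierCoeff_eq_of_ae_eq_scaleOrthogonal hhg
  simp only [sub_neg_eq_add] at hcoeff
  refine ⟨fun m hm => ?_, fun m => ?_⟩
  · rw [hcoeff, hH m hm]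
    rcases lt_or_eq_of_le (show m + 1 ≤ 0 by omega) with hm' | hm'
    · simp [hH _ hm']
    · have hg₀ : fourierCoeff (g : Tc → Ecn n) 0 ∈ β := by simpa using hL 0
      simp [hm', sub_starProjection_eq_zero β hg₀]
  · rw [hcoeff]
    refine starProjection_add_sub_starProjection_mem β (L.le_getD_top_of_forall_le hβ m) _ ?_
    simpa using hL (m + 1)

theorem multiplierImage_scaleOrthogonal_hardyFlag (hβ : ∀ γ ∈ L, β ≤ γ) :
    multiplierImage (fun θ => scaleOrthogonal β (toCircle θ : ℂ)) (hardyFlag L)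
      = hardyFlag (β :: L) := by
  refine (multiplierImage_scaleOrthogonal_toCircle_subset hβ).antisymm ?_
  have hinv (θ : Tc) : (toCircle θ : ℂ) * fourier (-1) θ = 1 := by
    rw [← fourier_one, ← fourier_add, add_neg_cancel, fourier_zero]
  calc hardyFlag (β :: L)
      = multiplierImage (fun θ => scaleOrthogonal β (toCircle θ : ℂ)
          * scaleOrthogonal β (fourier (-1) θ)) (hardyFlag (β :: L)) := by
        simp only [scaleOrthogonal_mul, hinv, scaleOrthogonal_one, multiplierImage_one]
    _ = multiplierImage (fun θ => scaleOrthogonal β (toCircle θ : ℂ))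
          (multiplierImage (fun θ => scaleOrthogonal β (fourier (-1) θ)) (hardyFlag (β :: L))) :=
        multiplierImage_mul _ ((map_continuous _).scaleOrthogonal β) _
    _ ⊆ _ := multiplierImage_mono _ (multiplierImage_scaleOrthogonal_fourier_neg_one_subset hβ)

theorem multiplierImage_prod_scaleOrthogonal_hardy (L : List (Submodule ℂ (Ecn n)))
    (hL : L.Pairwise (· ≤ ·)) :
    multiplierImage (fun θ => (L.map fun β => scaleOrthogonal β (toCircle θ : ℂ)).prod) (Hardy n)
      = hardyFlag L := by
  induction L with
  | nil => simp only [List.map_nil, List.prod_nil, multiplierImage_one, hardyFlag_nil]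
  | cons β L ih =>
    obtain ⟨hβ, hL⟩ := List.pairwise_cons.mp hL
    have hcont :
        Continuous fun θ : Tc => (L.map fun γ => scaleOrthogonal γ (toCircle θ : ℂ)).prod :=
      continuous_list_prod L fun γ _ =>
        (continuous_subtype_val.comp continuous_toCircle).scaleOrthogonal γ
    simp only [List.map_cons, List.prod_cons]
    rw [multiplierImage_mul _ hcont, ih hL, multiplierImage_scaleOrthogonal_hardyFlag hβ]

end HardyFlag

theorem product_of_projection_loops_applied_to_hardy_space
    (n k : ℕ)
    (α : Fin (k - 1) → Submodule ℂ (Ecn n)) (hmono : Monotone α) :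
    {g : H2 n | ∃ f ∈ Hardy n, (g : Tc → Ecn n) =ᵐ[volume] fun θ =>
        (((List.finRange (k - 1)).map (fun j =>
            projL (α j) + (AddCircle.toCircle θ : ℂ) • (1 - projL (α j)))).prod :
          Ecn n →L[ℂ] Ecn n) ((f : Tc → Ecn n) θ)}
      = {f : H2 n | f ∈ Hardy n ∧
          ∀ m : Fin (k - 1), fourierCoeff (f : Tc → Ecn n) ((m : ℕ) : ℤ) ∈ α m} := by
  have hsorted : ((List.finRange (k - 1)).map α).Pairwise (· ≤ ·) :=
    (List.pairwise_le_finRange (k - 1)).map α fun _ _ hij => hmono hij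
  rw [← hardyFlag_map_finRange, ← multiplierImage_prod_scaleOrthogonal_hardy _ hsorted]
  simp only [List.map_map]
  -- `projL β` unfolds to `β.starProjection`, so each factor is `scaleOrthogonal (α j) _`.
  rfl

end
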